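/- There exists a homeomorphism between the admissible domain Ω, equipped with the subspace topology inherited from E → ℝ, and the full space E → ℝ. In particular, Ω is homeomorphic to a Euclidean space of dimension equal to the cardinality of E. -/

import Mathlib

/-- The admissible domain: edge weightings that are positive and satisfy the strict
triangle inequalities on every face. -/
def admissibleDomain {E F : Type*} (σ₁ σ₂ σ₃ : F → E) : Set (E → ℝ) :=
  {ℓ | (∀ e, 0 < ℓ e) ∧ ∀ f,
    ℓ (σ₁ f) < ℓ (σ₂ f) + ℓ (σ₃ f) ∧
    ℓ (σ₂ f) < ℓ (σ₃ f) + ℓ (σ₁ f) ∧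
    ℓ (σ₃ f) < ℓ (σ₁ f) + ℓ (σ₂ f)}

/-- A convex open set containing `0` in a topological real vector space is homeomorphic
to the whole space, via the gauge-based radial map. -/
noncomputable def openConvexHomeomorph {X : Type*} [AddCommGroup X] [Module ℝ X]
    [TopologicalSpace X] [IsTopologicalAddGroup X] [ContinuousSMul ℝ X]
    {s : Set X} (ho : IsOpen s) (hc : Convex ℝ s) (h0 : (0 : X) ∈ s) : s ≃ₜ X where
  toFun x := (1 - gauge s (x : X))⁻¹ • (x : X)
  invFun y := ⟨(1 + gauge s y)⁻¹ • y, by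
    have hg : gauge s ((1 + gauge s y)⁻¹ • y) < 1 := by
      have h1 : (0:ℝ) < 1 + gauge s y := by have := gauge_nonneg (s := s) y; linarith
      rw [gauge_smul_of_nonneg (inv_nonneg.2 h1.le), smul_eq_mul]
      rw [inv_mul_lt_iff₀ h1, mul_one]
      linarith
    have hmem : (1 + gauge s y)⁻¹ • y ∈ {x | gauge s x < 1} := hg
    rwa [gauge_lt_one_eq_self_of_isOpen hc h0 ho] at hmem⟩
  left_inv x := by
    have hx1 : gauge s (x : X) < 1 := gauge_lt_one_of_mem_of_isOpen ho x.2
    have hpos : (0:ℝ) < 1 - gauge s (x : X) := by linarith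
    ext
    simp only
    rw [gauge_smul_of_nonneg (inv_nonneg.2 hpos.le), smul_eq_mul]
    have : 1 + (1 - gauge s (x:X))⁻¹ * gauge s (x:X) = (1 - gauge s (x:X))⁻¹ := by
      field_simp; ring
    rw [this, inv_inv, smul_smul, mul_inv_cancel₀ hpos.ne', one_smul]
  right_inv y := by
    have hg0 : (0:ℝ) ≤ gauge s y := gauge_nonneg _
    have h1 : (0:ℝ) < 1 + gauge s y := by linarith
    simp only
    rw [gauge_smul_of_nonneg (inv_nonneg.2 h1.le), smul_eq_mul]
    have : 1 - (1 + gauge s y)⁻¹ * gauge s y = (1 + gauge s y)⁻¹ := by field_simp; ring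
    rw [this, inv_inv, smul_smul, mul_inv_cancel₀ h1.ne', one_smul]
  continuous_toFun := by
    have hnb : s ∈ nhds (0 : X) := ho.mem_nhds h0
    have hgc : Continuous (gauge s) := continuous_gauge hc hnb
    refine Continuous.smul (Continuous.inv₀ (by fun_prop) ?_) continuous_subtype_val
    intro x
    have := gauge_lt_one_of_mem_of_isOpen ho x.2
    intro h; rw [sub_eq_zero] at h; exact absurd h.symm (ne_of_lt this)
  continuous_invFun := by
    have hnb : s ∈ nhds (0 : X) := ho.mem_nhds h0
    have hgc : Continuous (gauge s) := continuous_gauge hc hnb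
    refine Continuous.subtype_mk ?_ _
    refine Continuous.smul (Continuous.inv₀ (by fun_prop) ?_) continuous_id
    intro y
    have := gauge_nonneg (s := s) y
    positivity

private lemma comb_lt {a b x y x' y' : ℝ} (ha : 0 ≤ a) (hb : 0 ≤ b) (hab : a + b = 1)
    (h : x < y) (h' : x' < y') : a * x + b * x' < a * y + b * y' := by
  rcases ha.eq_or_lt with rfl | ha'
  · have hb1 : b = 1 := by linarith
    subst hb1; simpa using h'
  · have h1 : a * x < a * y := by nlinarith
    have h2 : b * x' ≤ b * y' := by nlinarith
    linarith

lemma admissibleDomain_convex {E F : Type*} (σ₁ σ₂ σ₃ : F → E) :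
    Convex ℝ (admissibleDomain σ₁ σ₂ σ₃) := by
  intro ℓ hℓ ℓ' hℓ' a b ha hb hab
  obtain ⟨hpos, htri⟩ := hℓ
  obtain ⟨hpos', htri'⟩ := hℓ'
  refine ⟨fun e => ?_, fun f => ?_⟩
  · have := comb_lt ha hb hab (hpos e) (hpos' e)
    simpa using this.trans_le (by simp [mul_comm])
  · obtain ⟨h1, h2, h3⟩ := htri f
    obtain ⟨h1', h2', h3'⟩ := htri' f
    refine ⟨?_, ?_, ?_⟩ <;>
      [have := comb_lt ha hb hab h1 h1'; have := comb_lt ha hb hab h2 h2';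
       have := comb_lt ha hb hab h3 h3'] <;>
      simp only [Pi.add_apply, Pi.smul_apply, smul_eq_mul] <;> nlinarith

lemma admissibleDomain_isOpen {E F : Type*} [Finite E] [Finite F] (σ₁ σ₂ σ₃ : F → E) :
    IsOpen (admissibleDomain σ₁ σ₂ σ₃) := by
  have hrw : admissibleDomain σ₁ σ₂ σ₃ =
      (⋂ e, {ℓ : E → ℝ | 0 < ℓ e}) ∩
      ⋂ f, ({ℓ : E → ℝ | ℓ (σ₁ f) < ℓ (σ₂ f) + ℓ (σ₃ f)} ∩
        ({ℓ : E → ℝ | ℓ (σ₂ f) < ℓ (σ₃ f) + ℓ (σ₁ f)} ∩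
         {ℓ : E → ℝ | ℓ (σ₃ f) < ℓ (σ₁ f) + ℓ (σ₂ f)})) := by
    ext ℓ
    simp [admissibleDomain, Set.mem_iInter, forall_and]
  rw [hrw]
  refine IsOpen.inter (isOpen_iInter_of_finite fun e => ?_)
    (isOpen_iInter_of_finite fun f => ?_)
  · exact isOpen_lt continuous_const (continuous_apply e)
  · refine IsOpen.inter ?_ (IsOpen.inter ?_ ?_) <;>
      exact isOpen_lt (by fun_prop) (by fun_prop)

/-- The admissible domain (with the subspace topology from `E → ℝ`) is homeomorphic to
the full space `E → ℝ`; in particular it is homeomorphic to a Euclidean space of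
dimension `|E|`. -/
theorem admissibleDomain_homeomorph_pi
    {E F : Type*} [Fintype E] [Fintype F] (σ₁ σ₂ σ₃ : F → E) :
    Nonempty ((admissibleDomain σ₁ σ₂ σ₃) ≃ₜ (E → ℝ)) ∧
    Nonempty ((admissibleDomain σ₁ σ₂ σ₃) ≃ₜ EuclideanSpace ℝ (Fin (Fintype.card E))) := by
  set Ω := admissibleDomain σ₁ σ₂ σ₃ with hΩ
  have hp : (fun _ => (1:ℝ)) ∈ Ω := ⟨fun _ => one_pos, fun f => by norm_num⟩
  set p : E → ℝ := fun _ => (1:ℝ)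
  set e : (E → ℝ) ≃ₜ (E → ℝ) := Homeomorph.addLeft (-p)
  set t : Set (E → ℝ) := e '' Ω with ht
  have hto : IsOpen t := e.isOpen_image.2 (admissibleDomain_isOpen σ₁ σ₂ σ₃)
  have htc : Convex ℝ t := (admissibleDomain_convex σ₁ σ₂ σ₃).translate (-p)
  have ht0 : (0 : E → ℝ) ∈ t := ⟨p, hp, by simp [e]⟩
  have h1 : Nonempty (Ω ≃ₜ (E → ℝ)) :=
    ⟨(e.image Ω).trans (openConvexHomeomorph hto htc ht0)⟩
  refine ⟨h1, ?_⟩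
  obtain ⟨h⟩ := h1
  exact ⟨h.trans ((Homeomorph.piCongrLeft (Y := fun _ => ℝ) (Fintype.equivFin E)).trans
    (EuclideanSpace.equiv (Fin (Fintype.card E)) ℝ).toHomeomorph.symm)⟩
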